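/- arXiv:1503.01922 — 2 statements merged into one kernel-verified Lean document; each statement's English description precedes it below -/
import Mathlib

section
/- There is exactly one formal power series f ∈ ℝ[[x]] satisfying f = exp(x·f²) (where exp is applied to the power series x·f², whose constant term is 0), and its coefficients are given by: the constant coefficient of f is 1, and for every n ≥ 1 the coefficient of xⁿ in f equals (2n+1)^{n−1}/n!. -/
/-- For a formal power series `g` (intended with zero constant term), `expPS g` is the
formal power series `∑_{m ≥ 0} gᵐ/m!`; its `n`-th coefficient only involves `gᵐ` for
`m ≤ n` when `g` has zero constant term. -/
noncomputable def expPS (g : PowerSeries ℝ) : PowerSeries ℝ :=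
  PowerSeries.mk fun n =>
    ∑ m ∈ Finset.range (n + 1), PowerSeries.coeff n (g ^ m) / (m.factorial : ℝ)


section Aux
open Finset Polynomial

-- monomial finite difference vanishing
lemma fd_pow_zero : ∀ j n : ℕ, j < n → (fwdDiff (1:ℝ))^[n] (fun t : ℝ => t ^ j) = 0 := by
  intro j
  induction j using Nat.strong_induction_on with
  | _ j IH =>
    intro n hjn
    obtain ⟨m, rfl⟩ : ∃ m, n = m + 1 := ⟨n - 1, (Nat.succ_pred_eq_of_pos (Nat.pos_of_ne_zero (by omega))).symm⟩
    rw [Function.iterate_succ_apply]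
    have hΔ : fwdDiff (1:ℝ) (fun t : ℝ => t ^ j)
        = fun t : ℝ => ∑ i ∈ range j, (j.choose i : ℝ) * t ^ i := by
      funext t
      rw [fwdDiff]
      rw [add_pow]
      rw [Finset.sum_range_succ]
      simp [mul_comm]
    rw [hΔ]
    have : (fun t : ℝ => ∑ i ∈ range j, (j.choose i : ℝ) * t ^ i)
        = ∑ i ∈ range j, fun t : ℝ => (j.choose i : ℝ) * t ^ i := by
      funext t; simp
    rw [this, fwdDiff_iter_finset_sum]
    apply Finset.sum_eq_zero
    intro i hi
    have hi' : i < j := Finset.mem_range.mp hi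
    have : (fun t : ℝ => (j.choose i : ℝ) * t ^ i) = (j.choose i : ℝ) • (fun t : ℝ => t ^ i) := by
      funext t; simp
    rw [this, fwdDiff_iter_const_smul, IH i hi' m (by omega)]
    simp

lemma fd_sum (n j : ℕ) (h : j < n) (x : ℝ) :
    ∑ k ∈ range (n + 1), (-1 : ℝ) ^ (n - k) * (n.choose k) * (x + k) ^ j = 0 := by
  have := fwdDiff_iter_eq_sum_shift (M := ℝ) (G := ℝ) (h := 1) (fun t => t ^ j) n x
  rw [fd_pow_zero j n h] at this
  have h2 : (0:ℝ) = ∑ k ∈ range (n + 1), ((-1 : ℤ) ^ (n - k) * n.choose k) • ((x + k • (1:ℝ)) ^ j) := this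
  rw [eq_comm] at h2
  rw [Finset.sum_congr rfl (fun k _ => ?_)] at h2
  · exact h2
  · push_cast [zsmul_eq_mul]
    ring

noncomputable def Tt : ℕ → ℝ → ℝ
  | 0, _ => 1
  | (k+1), x => x * (x + (k+1)) ^ k

lemma poly_eq_of_deriv_eval {p q : ℝ[X]} (hd : derivative p = derivative q) {w : ℝ}
    (he : p.eval w = q.eval w) : p = q := by
  have h1 : derivative (p - q) = 0 := by rw [derivative_sub, hd, sub_self]
  have h2 : p - q = C ((p - q).coeff 0) :=
    (p - q).eq_C_of_natDegree_eq_zero (natDegree_eq_zero_of_derivative_eq_zero h1)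
  have h3 : (p - q).coeff 0 = 0 := by
    have := congrArg (eval w) h2
    rw [eval_sub, he, sub_self, eval_C] at this
    exact this.symm
  rw [h3, map_zero] at h2
  exact sub_eq_zero.mp h2

lemma rothe_poly : ∀ (n : ℕ) (x z : ℝ),
    ∑ k ∈ range (n + 1), C ((n.choose k : ℝ) * Tt k x) * (X + C (z + ((n - k : ℕ) : ℝ))) ^ (n - k)
      = (X + C (x + z + n)) ^ n := by
  intro n
  induction n with
  | zero => intro x z; simp [Tt]
  | succ n IH =>
    intro x z
    apply poly_eq_of_deriv_eval (w := -(x + z + (n+1)))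
    · -- derivatives agree
      rw [derivative_pow]
      rw [map_sum]
      have hL : ∀ k ∈ range (n + 2),
          derivative (C (((n+1).choose k : ℝ) * Tt k x) * (X + C (z + (((n+1) - k : ℕ) : ℝ))) ^ ((n+1) - k))
          = C ((((n+1) - k : ℕ) : ℝ)) * (C (((n+1).choose k : ℝ) * Tt k x) * (X + C (z + (((n+1) - k : ℕ) : ℝ))) ^ ((n+1) - k - 1)) := by
        intro k _
        rw [derivative_C_mul, derivative_pow]
        simp
        ring
      rw [Finset.sum_congr rfl hL]
      rw [Finset.sum_range_succ]
      have hlast : C (((n + 1 - (n+1) : ℕ) : ℝ)) = 0 := by simp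
      rw [hlast, zero_mul, add_zero]
      have hterm : ∀ k ∈ range (n + 1),
          C ((((n+1) - k : ℕ) : ℝ)) * (C (((n+1).choose k : ℝ) * Tt k x) * (X + C (z + (((n+1) - k : ℕ) : ℝ))) ^ ((n+1) - k - 1))
          = C ((n : ℝ) + 1) * (C ((n.choose k : ℝ) * Tt k x) * (X + C ((z+1) + (((n - k : ℕ)) : ℝ))) ^ (n - k)) := by
        intro k hk
        have hk' : k ≤ n := by simpa using Nat.lt_succ_iff.mp (Finset.mem_range.mp hk)
        have e1 : (n+1) - k - 1 = n - k := by omega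
        have e2 : (((n+1) - k : ℕ) : ℝ) = ((n - k : ℕ) : ℝ) + 1 := by
          rw [Nat.cast_sub (by omega), Nat.cast_sub hk']; push_cast; ring
        have e3 : (((n+1).choose k : ℝ)) * (((n+1) - k : ℕ) : ℝ) = ((n:ℝ)+1) * (n.choose k : ℝ) := by
          have := Nat.choose_mul_succ_eq (n+1-1) k
          simp only [Nat.add_sub_cancel] at this
          have := congrArg (Nat.cast (R := ℝ)) this
          push_cast [Nat.cast_sub (show k ≤ n+1 by omega)] at this
          rw [Nat.cast_sub (show k ≤ n+1 by omega)]
          push_cast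
          linarith
        rw [e1, e2]
        have e4 : z + (((n - k : ℕ) : ℝ) + 1) = (z + 1) + ((n - k : ℕ) : ℝ) := by ring
        rw [e4, ← mul_assoc, ← mul_assoc, ← C_mul, ← C_mul]
        rw [e2] at e3
        congr 2
        linear_combination Tt k x * e3
      rw [Finset.sum_congr rfl hterm, ← Finset.mul_sum, IH x (z+1)]
      have : x + (z+1) + (n:ℝ) = x + z + ((n:ℕ)+1 : ℕ) := by push_cast; ring
      rw [this]
      rw [derivative_add, derivative_X, derivative_C, add_zero, mul_one]
      push_cast
      ring
    · -- evaluation at the root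
      rw [eval_pow, eval_add, eval_X, eval_C]
      have : -(x + z + ((n:ℝ)+1)) + (x + z + (((n+1) : ℕ) : ℝ)) = 0 := by push_cast; ring
      push_cast
      rw [show -(x + z + ((n:ℝ)+1)) + (x + z + ((n:ℝ)+1)) = 0 by ring]
      rw [zero_pow (by omega)]
      rw [eval_finset_sum]
      have hterm : ∀ k ∈ range (n + 2),
          eval (-(x + z + ((n:ℝ)+1))) (C (((n+1).choose k : ℝ) * Tt k x) * (X + C (z + (((n+1) - k : ℕ) : ℝ))) ^ ((n+1) - k))
          = x * ((-1 : ℝ) ^ ((n+1) - k) * ((n+1).choose k : ℝ) * (x + k) ^ n) := by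
        intro k hk
        have hk' : k ≤ n + 1 := by simpa using Nat.lt_succ_iff.mp (Finset.mem_range.mp hk)
        rw [eval_mul, eval_pow, eval_add, eval_X, eval_C, eval_C]
        have e1 : -(x + z + ((n:ℝ)+1)) + (z + (((n+1) - k : ℕ) : ℝ)) = -(x + k) := by
          rw [Nat.cast_sub hk']; push_cast; ring
        rw [e1]
        match k, hk' with
        | 0, _ =>
          simp only [Tt, Nat.sub_zero, Nat.cast_zero, add_zero, mul_one]
          rw [neg_pow]
          ring_nf
        | (j+1), hj' =>
          have hj : j ≤ n := by omega
          simp only [Tt]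
          push_cast
          rw [neg_pow]
          have e3 : (x + ((j:ℝ)+1)) ^ j * (x + ((j:ℝ)+1)) ^ (n - j) = (x + ((j:ℝ)+1)) ^ n := by
            rw [← pow_add, Nat.add_sub_cancel' hj]
          linear_combination ((-1:ℝ) ^ (n - j) * (((n+1).choose (j+1) : ℝ)) * x) * e3
      rw [Finset.sum_congr rfl hterm, ← Finset.mul_sum]
      have := fd_sum (n+1) n (by omega) x
      rw [Finset.sum_congr rfl (fun k hk => ?_)] at this
      · rw [this, mul_zero]
      · rfl

lemma abel1 (n : ℕ) (x y : ℝ) :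
    ∑ k ∈ range (n + 1), (n.choose k : ℝ) * Tt k x * (y + ((n - k : ℕ) : ℝ)) ^ (n - k)
      = (x + y + n) ^ n := by
  have h := congrArg (eval y) (rothe_poly n x 0)
  rw [eval_finset_sum] at h
  simp only [eval_mul, eval_pow, eval_add, eval_X, eval_C, zero_add] at h
  rw [h, show y + (x + 0 + (n:ℝ)) = x + y + n by ring]

lemma Tdec (j : ℕ) (y : ℝ) :
    Tt j y = (y + (j:ℝ)) ^ j - (j:ℝ) * (y + (j:ℝ)) ^ (j - 1) := by
  match j with
  | 0 => simp [Tt]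
  | (i+1) =>
    simp only [Tt, Nat.add_sub_cancel]
    push_cast
    rw [pow_succ]
    ring

lemma abel2 (n : ℕ) (x y : ℝ) :
    ∑ k ∈ range (n + 1), (n.choose k : ℝ) * Tt k x * Tt (n - k) y = Tt n (x + y) := by
  match n with
  | 0 => simp [Tt]
  | (m+1) =>
    have hsplit : ∀ k ∈ range (m + 2),
        ((m+1).choose k : ℝ) * Tt k x * Tt ((m+1) - k) y
          = ((m+1).choose k : ℝ) * Tt k x * (y + (((m+1) - k : ℕ) : ℝ)) ^ ((m+1) - k)
            - ((m+1).choose k : ℝ) * Tt k x * ((((m+1) - k : ℕ) : ℝ) * (y + (((m+1) - k : ℕ) : ℝ)) ^ ((m+1) - k - 1)) := by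
      intro k _
      rw [Tdec ((m+1) - k) y]
      ring
    rw [Finset.sum_congr rfl hsplit, Finset.sum_sub_distrib, abel1]
    have h2 : ∑ k ∈ range (m + 2),
        ((m+1).choose k : ℝ) * Tt k x * ((((m+1) - k : ℕ) : ℝ) * (y + (((m+1) - k : ℕ) : ℝ)) ^ ((m+1) - k - 1))
        = ((m:ℝ)+1) * (x + (y+1) + m) ^ m := by
      rw [Finset.sum_range_succ]
      simp only [Nat.sub_self, Nat.cast_zero, zero_mul, mul_zero, add_zero]
      have hterm : ∀ k ∈ range (m + 1),
          ((m+1).choose k : ℝ) * Tt k x * ((((m+1) - k : ℕ) : ℝ) * (y + (((m+1) - k : ℕ) : ℝ)) ^ ((m+1) - k - 1))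
          = ((m:ℝ)+1) * ((m.choose k : ℝ) * Tt k x * ((y+1) + ((m - k : ℕ) : ℝ)) ^ (m - k)) := by
        intro k hk
        have hk' : k ≤ m := Nat.lt_succ_iff.mp (Finset.mem_range.mp hk)
        have e1 : (m+1) - k - 1 = m - k := by omega
        have e2 : (((m+1) - k : ℕ) : ℝ) = ((m - k : ℕ) : ℝ) + 1 := by
          rw [Nat.cast_sub (by omega), Nat.cast_sub hk']; push_cast; ring
        have e3 : (((m+1).choose k : ℝ)) * ((((m+1) - k : ℕ)) : ℝ) = ((m:ℝ)+1) * (m.choose k : ℝ) := by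
          have := Nat.choose_mul_succ_eq m k
          have := congrArg (Nat.cast (R := ℝ)) this
          push_cast [Nat.cast_sub (show k ≤ m+1 by omega)] at this
          rw [Nat.cast_sub (show k ≤ m+1 by omega)]
          push_cast
          linarith
        rw [e1, e2, show y + (((m - k : ℕ) : ℝ) + 1) = (y+1) + ((m - k : ℕ) : ℝ) by ring]
        rw [e2] at e3
        linear_combination (Tt k x * ((y+1) + ((m - k : ℕ) : ℝ)) ^ (m - k)) * e3
      rw [Finset.sum_congr rfl hterm, ← Finset.mul_sum, abel1]
    rw [h2]
    simp only [Tt]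
    push_cast
    rw [show x + (y+1) + (m:ℝ) = x + y + ((m:ℝ)+1) by ring]
    rw [pow_succ]
    ring

noncomputable def aa : ℕ → ℝ := fun n => Tt n (1/2) * 2 ^ n / n.factorial

noncomputable def FF : PowerSeries ℝ := PowerSeries.mk aa

lemma conv (n r : ℕ) :
    ∑ k ∈ range (n + 1),
        (Tt k (1/2) * 2 ^ k / k.factorial) * (Tt (n - k) ((r:ℝ)/2) * 2 ^ (n - k) / (n - k).factorial)
      = Tt n (((r:ℝ) + 1)/2) * 2 ^ n / n.factorial := by
  have hterm : ∀ k ∈ range (n + 1),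
      (Tt k (1/2) * 2 ^ k / k.factorial) * (Tt (n - k) ((r:ℝ)/2) * 2 ^ (n - k) / (n - k).factorial)
      = ((n.choose k : ℝ) * Tt k (1/2) * Tt (n - k) ((r:ℝ)/2)) * ((2:ℝ) ^ n / n.factorial) := by
    intro k hk
    have hk' : k ≤ n := Nat.lt_succ_iff.mp (Finset.mem_range.mp hk)
    have h2 : (2:ℝ) ^ k * 2 ^ (n - k) = 2 ^ n := by
      rw [← pow_add, Nat.add_sub_cancel' hk']
    have hc : (n.choose k : ℝ) = n.factorial / (k.factorial * (n - k).factorial) :=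
      Nat.cast_choose ℝ hk'
    have f1 : (k.factorial : ℝ) ≠ 0 := Nat.cast_ne_zero.mpr k.factorial_ne_zero
    have f2 : ((n - k).factorial : ℝ) ≠ 0 := Nat.cast_ne_zero.mpr (n - k).factorial_ne_zero
    have f3 : (n.factorial : ℝ) ≠ 0 := Nat.cast_ne_zero.mpr n.factorial_ne_zero
    rw [hc]
    field_simp
    linear_combination (Tt k (1/2) * Tt (n - k) ((r:ℝ)/2)) * h2
  rw [Finset.sum_congr rfl hterm, ← Finset.sum_mul]
  rw [abel2 n (1/2) ((r:ℝ)/2)]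
  rw [show (1:ℝ)/2 + (r:ℝ)/2 = ((r:ℝ)+1)/2 by ring]
  ring

lemma powcoeff (r n : ℕ) :
    PowerSeries.coeff n (FF ^ r) = Tt n ((r:ℝ)/2) * 2 ^ n / n.factorial := by
  induction r generalizing n with
  | zero =>
    rw [pow_zero, PowerSeries.coeff_one]
    match n with
    | 0 => simp [Tt]
    | (m+1) => simp [Tt]
  | succ r IH =>
    rw [pow_succ']
    rw [PowerSeries.coeff_mul]
    rw [Finset.Nat.sum_antidiagonal_eq_sum_range_succ_mk]
    have hterm : ∀ k ∈ range (n + 1),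
        PowerSeries.coeff k FF * PowerSeries.coeff (n - k) (FF ^ r)
        = (Tt k (1/2) * 2 ^ k / k.factorial) * (Tt (n - k) ((r:ℝ)/2) * 2 ^ (n - k) / (n - k).factorial) := by
      intro k _
      rw [IH]
      simp [FF, aa]
    rw [Finset.sum_congr rfl hterm, conv]
    push_cast
    ring_nf

lemma coeff_expPS_pow (g : PowerSeries ℝ) (n : ℕ) :
    PowerSeries.coeff n (expPS (PowerSeries.X * g ^ 2))
      = ∑ m ∈ Finset.range (n + 1),
          PowerSeries.coeff (n - m) (g ^ (2 * m)) / (m.factorial : ℝ) := by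
  rw [expPS, PowerSeries.coeff_mk]
  refine Finset.sum_congr rfl fun m hm => ?_
  have hm' : m ≤ n := Nat.lt_succ_iff.mp (Finset.mem_range.mp hm)
  rw [mul_pow, ← pow_mul]
  rw [show n = (n - m) + m from (Nat.sub_add_cancel hm').symm]
  rw [PowerSeries.coeff_X_pow_mul]
  rw [Nat.sub_add_cancel hm']

lemma feq : FF = expPS (PowerSeries.X * FF ^ 2) := by
  ext n
  rw [coeff_expPS_pow]
  have hcoeff : PowerSeries.coeff n FF = aa n := by simp [FF]
  rw [hcoeff]
  have hterm : ∀ m ∈ Finset.range (n+1),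
      PowerSeries.coeff (n - m) (FF ^ (2 * m)) / (m.factorial : ℝ)
      = Tt (n - m) (m:ℝ) * 2 ^ (n - m) / ((n - m).factorial * m.factorial) := by
    intro m _
    rw [powcoeff]
    rw [show ((2 * m : ℕ) : ℝ)/2 = (m : ℝ) by push_cast; ring]
    field_simp
  rw [Finset.sum_congr rfl hterm]
  match n with
  | 0 => simp [aa, Tt]
  | (N+1) =>
    rw [Finset.sum_range_succ']
    have h0 : Tt (N + 1 - 0) ((0:ℕ):ℝ) * 2 ^ (N + 1 - 0) / (((N + 1 - 0).factorial : ℝ) * (Nat.factorial 0 : ℝ)) = 0 := by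
      simp [Tt]
    rw [h0, add_zero]
    have hterm2 : ∀ i ∈ Finset.range (N+1),
        Tt (N + 1 - (i+1)) (((i+1:ℕ)):ℝ) * 2 ^ (N + 1 - (i+1)) / (((N + 1 - (i+1)).factorial : ℝ) * ((i+1).factorial : ℝ))
        = (N.choose i : ℝ) * (2 * ((N:ℝ)+1)) ^ (N - i) / ((N+1).factorial : ℝ) := by
      intro i hi
      have hi' : i ≤ N := Nat.lt_succ_iff.mp (Finset.mem_range.mp hi)
      have hred : N + 1 - (i+1) = N - i := by omega
      rw [hred]
      rcases Nat.lt_or_ge i N with hlt | hge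
      · obtain ⟨M, hM⟩ : ∃ M, N - i = M + 1 := ⟨N - i - 1, by omega⟩
        rw [hM]
        simp only [Tt]
        have hNi : (N : ℝ) = (i : ℝ) + (M : ℝ) + 1 := by
          have : N = i + M + 1 := by omega
          rw [this]; push_cast; ring
        have hc : (N.choose i : ℝ) = (N.factorial : ℝ) / ((i.factorial : ℝ) * ((N - i).factorial : ℝ)) :=
          Nat.cast_choose ℝ hi'
        rw [hc, hM] at *
        have f1 : (i.factorial : ℝ) ≠ 0 := Nat.cast_ne_zero.mpr i.factorial_ne_zero
        have f2 : ((M+1).factorial : ℝ) ≠ 0 := Nat.cast_ne_zero.mpr (M+1).factorial_ne_zero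
        have f3 : ((N+1).factorial : ℝ) ≠ 0 := Nat.cast_ne_zero.mpr (N+1).factorial_ne_zero
        have f4 : ((i+1).factorial : ℝ) = ((i:ℝ)+1) * (i.factorial : ℝ) := by
          rw [Nat.factorial_succ]; push_cast; ring
        have f5 : ((N+1).factorial : ℝ) = ((N:ℝ)+1) * (N.factorial : ℝ) := by
          rw [Nat.factorial_succ]; push_cast; ring
        have hbase : ((i:ℝ)+1) + ((M:ℝ)+1) = (N:ℝ)+1 := by rw [hNi]; ring
        push_cast
        rw [show ((i:ℝ)+1) + ((M:ℝ)+1) = (N:ℝ)+1 from hbase]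
        rw [f4, f5]
        have hpow : (2 * ((N:ℝ)+1)) ^ (M+1) = 2 ^ (M+1) * ((N:ℝ)+1) ^ (M+1) := by rw [mul_pow]
        rw [hpow]
        have f6 : (N.factorial : ℝ) ≠ 0 := Nat.cast_ne_zero.mpr N.factorial_ne_zero
        field_simp
        ring
      · have : i = N := le_antisymm hi' hge
        subst this
        simp only [Nat.sub_self]
        simp [Tt, Nat.choose_self]
    rw [Finset.sum_congr rfl hterm2]
    rw [← Finset.sum_div]
    have hbin : ∑ i ∈ Finset.range (N+1), (N.choose i : ℝ) * (2 * ((N:ℝ)+1)) ^ (N - i)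
        = (1 + 2 * ((N:ℝ)+1)) ^ N := by
      rw [add_pow]
      refine Finset.sum_congr rfl fun i hi => ?_
      rw [one_pow]
      ring
    rw [hbin]
    rw [aa]
    simp only [Tt]
    have : ((1:ℝ)/2 + ((N:ℝ)+1)) ^ N * 2 ^ N = (1 + 2*((N:ℝ)+1)) ^ N := by
      rw [← mul_pow]; norm_num; ring_nf
    field_simp
    rw [pow_succ]
    ring_nf
    rw [show ((3:ℝ)/2 + N) ^ N * 2 ^ N = (3 + N*2)^N by rw [← mul_pow]; congr 1; ring]

lemma pow_coeff_congr {g h : PowerSeries ℝ} {N : ℕ}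
    (hc : ∀ j, j ≤ N → PowerSeries.coeff j g = PowerSeries.coeff j h) :
    ∀ s : ℕ, ∀ j, j ≤ N → PowerSeries.coeff j (g ^ s) = PowerSeries.coeff j (h ^ s) := by
  intro s
  induction s with
  | zero => intro j _; rfl
  | succ s IH =>
    intro j hj
    rw [pow_succ', pow_succ', PowerSeries.coeff_mul, PowerSeries.coeff_mul]
    refine Finset.sum_congr rfl fun p hp => ?_
    have hmem := Finset.HasAntidiagonal.mem_antidiagonal.mp hp
    have h1 : p.1 ≤ N := by omega
    have h2 : p.2 ≤ N := by omega
    rw [hc p.1 h1, IH p.2 h2]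

lemma uniq (g : PowerSeries ℝ) (hg : g = expPS (PowerSeries.X * g ^ 2)) :
    ∀ n, PowerSeries.coeff n g = PowerSeries.coeff n FF := by
  intro n
  induction n using Nat.strong_induction_on with
  | _ n IH =>
    conv_lhs => rw [hg]
    conv_rhs => rw [feq]
    rw [coeff_expPS_pow, coeff_expPS_pow]
    refine Finset.sum_congr rfl fun m hm => ?_
    congr 1
    match m with
    | 0 => rfl
    | (m+1) =>
      have hle : n - (m+1) ≤ n - 1 ∨ n = 0 := by omega
      rcases Nat.eq_zero_or_pos n with h0 | hpos
      · subst h0; exact absurd (Finset.mem_range.mp hm) (by omega)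
      · refine pow_coeff_congr (N := n - (m+1)) (fun j hj => IH j (by omega)) _ _ le_rfl


theorem rooted_two_tree_generating_function :
    (∃! f : PowerSeries ℝ, f = expPS (PowerSeries.X * f ^ 2)) ∧
      ∀ f : PowerSeries ℝ, f = expPS (PowerSeries.X * f ^ 2) →
        PowerSeries.coeff 0 f = 1 ∧
          ∀ n : ℕ, 1 ≤ n →
            PowerSeries.coeff n f =
              (2 * (n : ℝ) + 1) ^ (n - 1) / (n.factorial : ℝ) := by
  have huniq : ∀ g : PowerSeries ℝ, g = expPS (PowerSeries.X * g ^ 2) → g = FF :=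
    fun g hg => PowerSeries.ext (uniq g hg)
  constructor
  · exact ⟨FF, feq, fun g hg => huniq g hg⟩
  · intro f hf
    have hfF : f = FF := huniq f hf
    subst hfF
    constructor
    · simp [FF, aa, Tt]
    · intro n hn
      obtain ⟨m, rfl⟩ : ∃ m, n = m + 1 := ⟨n - 1, by omega⟩
      have hc : PowerSeries.coeff (m+1) FF = aa (m+1) := by simp [FF]
      rw [hc, aa]
      simp only [Tt, Nat.add_sub_cancel]
      push_cast
      have h1 : ((1:ℝ)/2 + ((m:ℝ)+1)) ^ m * 2 ^ m = (2*((m:ℝ)+1)+1) ^ m := by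
        rw [← mul_pow]; ring_nf
      have f3 : (((m+1).factorial : ℕ) : ℝ) ≠ 0 := Nat.cast_ne_zero.mpr (m+1).factorial_ne_zero
      rw [pow_succ, h1.symm]
      field_simp

end Aux
end

section
/- Let x > 0 and y > 0 be real numbers and let D, D̄, S, S̄, P, P̄ be nonnegative real numbers satisfying the system: D = y + S + P; D̄ = y + S̄ + P̄; S = (y+P)·x·D; S̄ = (y+P)·x·D̄ + (y+P̄)·x·D; P = y·(e^{S̄}−1) + y·S·e^{S̄} + S·(e^{S̄}−1); P̄ = (e^{S̄} − S̄ − 1) + y·(e^{S̄}−1). Then D satisfies the implicit equation D = (y + (1+y)·x·D²/(1+x·D)) · exp( −x·D·(y(1+xD) − (1+y)D)·(2+xD) / ((y(1+xD) + (1+y)xD²)·(1+xD)²) ). -/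
/-!
Eliminating `P` and `P̄`, the system collapses to four identities:
`S (1 + xD) = xD²`, `D = (y + (1 + y) S) e^{S̄}`, `D̄ = (1 + y) e^{S̄} - 1` and
`S̄ (1 + xD)² = xD D̄ (2 + xD)`. The first two give `e^{S̄}` as a rational function of `D`,
hence so is `D̄` by the third, hence so is `S̄` by the fourth; putting this value of `S̄` back
into the second identity is the implicit equation.
-/

namespace SeriesParallelNetwork

section CommRing

variable {R : Type*} [CommRing R] {x y D Db S Sb P Pb E : R}

theorem series_mul_one_add (e1 : D = y + S + P) (e3 : S = (y + P) * x * D) :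
    S * (1 + x * D) = x * D ^ 2 := by
  linear_combination e3 - x * D * e1

theorem total_eq (e1 : D = y + S + P)
    (e5 : P = y * (E - 1) + y * S * E + S * (E - 1)) :
    D = (y + (1 + y) * S) * E := by
  linear_combination e1 + e5

theorem barTotal_eq (e2 : Db = y + Sb + Pb) (e6 : Pb = (E - Sb - 1) + y * (E - 1)) :
    Db = (1 + y) * E - 1 := by
  linear_combination e2 + e6

theorem barSeries_mul_sq (e1 : D = y + S + P) (e2 : Db = y + Sb + Pb)
    (e3 : S = (y + P) * x * D) (e4 : Sb = (y + P) * x * Db + (y + Pb) * x * D) :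
    Sb * (1 + x * D) ^ 2 = x * D * Db * (2 + x * D) := by
  linear_combination (1 + x * D) * (e4 - x * Db * e1 - x * D * e2) -
    x * Db * series_mul_one_add e1 e3

theorem total_mul_one_add (e1 : D = y + S + P) (e3 : S = (y + P) * x * D)
    (e5 : P = y * (E - 1) + y * S * E + S * (E - 1)) :
    D * (1 + x * D) = (y * (1 + x * D) + (1 + y) * x * D ^ 2) * E := by
  linear_combination (1 + x * D) * total_eq e1 e5 + (1 + y) * E * series_mul_one_add e1 e3

theorem barTotal_mul (e1 : D = y + S + P) (e2 : Db = y + Sb + Pb)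
    (e3 : S = (y + P) * x * D)
    (e5 : P = y * (E - 1) + y * S * E + S * (E - 1))
    (e6 : Pb = (E - Sb - 1) + y * (E - 1)) :
    Db * (y * (1 + x * D) + (1 + y) * x * D ^ 2) = (1 + y) * D - y * (1 + x * D) := by
  linear_combination (y * (1 + x * D) + (1 + y) * x * D ^ 2) * barTotal_eq e2 e6 -
    (1 + y) * total_mul_one_add e1 e3 e5

end CommRing

theorem barSeries_eq {K : Type*} [Field K] {x y D Db S Sb P Pb E : K}
    (hc : 1 + x * D ≠ 0) (hA : y * (1 + x * D) + (1 + y) * x * D ^ 2 ≠ 0)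
    (e1 : D = y + S + P) (e2 : Db = y + Sb + Pb)
    (e3 : S = (y + P) * x * D) (e4 : Sb = (y + P) * x * Db + (y + Pb) * x * D)
    (e5 : P = y * (E - 1) + y * S * E + S * (E - 1))
    (e6 : Pb = (E - Sb - 1) + y * (E - 1)) :
    Sb = -(x * D * ((y * (1 + x * D) - (1 + y) * D) * (2 + x * D)) /
      ((y * (1 + x * D) + (1 + y) * x * D ^ 2) * (1 + x * D) ^ 2)) := by
  rw [neg_div', eq_div_iff (mul_ne_zero hA (pow_ne_zero 2 hc))]
  linear_combination (y * (1 + x * D) + (1 + y) * x * D ^ 2) * barSeries_mul_sq e1 e2 e3 e4 +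
    x * D * (2 + x * D) * barTotal_mul e1 e2 e3 e5 e6

end SeriesParallelNetwork

theorem network_system_implies_implicit_equation_general
    (x y D Db S Sb P Pb : ℝ)
    (hx : 0 < x) (hy : 0 < y)
    (hD : 0 ≤ D)
    (e1 : D = y + S + P)
    (e2 : Db = y + Sb + Pb)
    (e3 : S = (y + P) * x * D)
    (e4 : Sb = (y + P) * x * Db + (y + Pb) * x * D)
    (e5 : P = y * (Real.exp Sb - 1) + y * S * Real.exp Sb + S * (Real.exp Sb - 1))
    (e6 : Pb = (Real.exp Sb - Sb - 1) + y * (Real.exp Sb - 1)) :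
    D = (y + (1 + y) * x * D ^ 2 / (1 + x * D)) *
        Real.exp (-(x * D * ((y * (1 + x * D) - (1 + y) * D) * (2 + x * D)) /
          ((y * (1 + x * D) + (1 + y) * x * D ^ 2) * (1 + x * D) ^ 2))) := by
  have hc : 0 < 1 + x * D := by positivity
  have hA : 0 < y * (1 + x * D) + (1 + y) * x * D ^ 2 := by positivity
  rw [← SeriesParallelNetwork.barSeries_eq hc.ne' hA.ne' e1 e2 e3 e4 e5 e6]
  field_simp
  linear_combination SeriesParallelNetwork.total_mul_one_add e1 e3 e5

theorem network_system_implies_implicit_equation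
    (x y D Db S Sb P Pb : ℝ)
    (hx : 0 < x) (hy : 0 < y)
    (hD : 0 ≤ D) (hDb : 0 ≤ Db) (hS : 0 ≤ S) (hSb : 0 ≤ Sb) (hP : 0 ≤ P) (hPb : 0 ≤ Pb)
    (e1 : D = y + S + P)
    (e2 : Db = y + Sb + Pb)
    (e3 : S = (y + P) * x * D)
    (e4 : Sb = (y + P) * x * Db + (y + Pb) * x * D)
    (e5 : P = y * (Real.exp Sb - 1) + y * S * Real.exp Sb + S * (Real.exp Sb - 1))
    (e6 : Pb = (Real.exp Sb - Sb - 1) + y * (Real.exp Sb - 1)) :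
    D = (y + (1 + y) * x * D ^ 2 / (1 + x * D)) *
        Real.exp (-(x * D * ((y * (1 + x * D) - (1 + y) * D) * (2 + x * D)) /
          ((y * (1 + x * D) + (1 + y) * x * D ^ 2) * (1 + x * D) ^ 2))) :=
  network_system_implies_implicit_equation_general x y D Db S Sb P Pb hx hy hD e1 e2 e3 e4 e5 e6
end
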